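/- Every finite poset admitting a representation by unit-length real intervals where each interval may be open, closed, or half-open (i.e., any of the four interval types with endpoints l(x) and l(x)+1), with x < y iff every point of the interval of x is less than every point of the interval of y, has order dimension at most 3. -/

import Mathlib

/-- `L` is a linear extension of the partial order on `α`. -/
def IsLinearExtension {α : Type*} [PartialOrder α] (L : α → α → Prop) : Prop :=
  IsLinearOrder α L ∧ ∀ x y : α, x ≤ y → L x y

/-- The order dimension of `α` is at most `t`. -/
def DimLE (α : Type*) [PartialOrder α] (t : ℕ) : Prop :=
  ∃ L : Fin t → α → α → Prop, (∀ i, IsLinearExtension (L i)) ∧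
    ∀ x y : α, x ≤ y ↔ ∀ i, L i x y

/-!
Encode every interval by its two endpoints in `ℝ ×ₗ ℤ`, so that `x < y` iff the right end of `x`
lies below the left end of `y`, and cut the line into the unit blocks `[k, k + 1)` containing the
left ends. Comparabilities go strictly up in block and elements two blocks apart are comparable,
so an incomparable pair lies in one block or in two adjacent ones. The first linear extension lists
the blocks in order and sorts each block by decreasing left ends. The other two pair up the blocks
as `{2g, 2g + 1}` and as `{2g - 1, 2g}`; inside a pair they sort the lower block by right ends and
the upper block by left ends and merge the two lists, so that an upper element comes before every
lower element it is incomparable to. Each incomparable pair is reversed by one of the three.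
-/

open Function Set

section Keys

variable {α : Type*} [PartialOrder α]

lemma isLinearExtension_of_injective_of_strictMono {K : Type*} [LinearOrder K] {k : α → K}
    (hinj : Injective k) (hk : StrictMono k) : IsLinearExtension fun x y => k x ≤ k y where
  left :=
    { refl := fun _ => le_rfl
      trans := fun _ _ _ => le_trans
      antisymm := fun _ _ h₁ h₂ => hinj (le_antisymm h₁ h₂)
      total := fun _ _ => le_total _ _ }
  right := fun _ _ h => hk.monotone h

lemma dimLE_three_of_keys {K₀ K₁ K₂ : Type*} [LinearOrder K₀] [LinearOrder K₁] [LinearOrder K₂]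
    {k₀ : α → K₀} {k₁ : α → K₁} {k₂ : α → K₂}
    (hinj₀ : Injective k₀) (hinj₁ : Injective k₁) (hinj₂ : Injective k₂)
    (hk₀ : StrictMono k₀) (hk₁ : StrictMono k₁) (hk₂ : StrictMono k₂)
    (hreal : ∀ x y, k₀ x ≤ k₀ y → k₁ x ≤ k₁ y → k₂ x ≤ k₂ y → x ≤ y) : DimLE α 3 := by
  refine ⟨![fun x y => k₀ x ≤ k₀ y, fun x y => k₁ x ≤ k₁ y, fun x y => k₂ x ≤ k₂ y],
    fun i => ?_, fun x y => ?_⟩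
  · fin_cases i
    exacts [isLinearExtension_of_injective_of_strictMono hinj₀ hk₀,
      isLinearExtension_of_injective_of_strictMono hinj₁ hk₁,
      isLinearExtension_of_injective_of_strictMono hinj₂ hk₂]
  · simp only [Fin.forall_fin_succ, IsEmpty.forall_iff, and_true]
    exact ⟨fun h => ⟨hk₀.monotone h, hk₁.monotone h, hk₂.monotone h⟩,
      fun ⟨h₀, h₁, h₂⟩ => hreal x y h₀ h₁ h₂⟩

end Keys

section Blocks

variable {α E W : Type*} (a b : α → E) (blk : α → ℤ) (w : α → W)

def blockKey (z : α) : ℤ ×ₗ (E ×ₗ W)ᵒᵈ :=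
  toLex (blk z, OrderDual.toDual (toLex (a z, w z)))

def pairKey (σ : ℤ) (z : α) : ℤ ×ₗ E ×ₗ Bool ×ₗ W :=
  toLex ((blk z + σ) / 2, toLex (if (blk z + σ) % 2 = 0 then b z else a z,
    toLex (decide ((blk z + σ) % 2 = 0), w z)))

variable {a b blk w}

lemma blockKey_injective (hw : Injective w) : Injective (blockKey a blk w) := by
  intro x y h
  simp only [blockKey, toLex_inj, Prod.mk.injEq, OrderDual.toDual_inj] at h
  exact hw h.2.2

lemma pairKey_injective (σ : ℤ) (hw : Injective w) : Injective (pairKey a b blk w σ) := by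
  intro x y h
  simp only [pairKey, toLex_inj, Prod.mk.injEq] at h
  exact hw h.2.2.2

variable [LinearOrder E] [LinearOrder W]

lemma blockKey_strictMono [PartialOrder α] (hblk : StrictMono blk) :
    StrictMono (blockKey a blk w) :=
  fun _ _ h => Prod.Lex.toLex_lt_toLex.2 (Or.inl (hblk h))

lemma pairKey_strictMono [PartialOrder α] (σ : ℤ) (hab : ∀ x y, x < y → b x < a y)
    (hblk : StrictMono blk) : StrictMono (pairKey a b blk w σ) := by
  intro x y hxy
  have hb := hblk hxy
  simp only [pairKey, Prod.Lex.toLex_lt_toLex]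
  by_cases hg : (blk x + σ) / 2 = (blk y + σ) / 2
  · have hx : (blk x + σ) % 2 = 0 := by omega
    have hy : (blk y + σ) % 2 ≠ 0 := by omega
    simp only [if_pos hx, if_neg hy]
    exact Or.inr ⟨hg, Or.inl (hab x y hxy)⟩
  · exact Or.inl (by omega)

lemma blockKey_lt_of_blk_lt {x y : α} (h : blk x < blk y) :
    blockKey a blk w x < blockKey a blk w y :=
  Prod.Lex.toLex_lt_toLex.2 (Or.inl h)

lemma blockKey_lt_of_blk_eq {x y : α} (hb : blk x = blk y)
    (h : toLex (a y, w y) < toLex (a x, w x)) : blockKey a blk w x < blockKey a blk w y :=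
  Prod.Lex.toLex_lt_toLex.2 (Or.inr ⟨hb, h⟩)

lemma pairKey_lt_of_blk_eq {σ : ℤ} {x y : α} (hb : blk x = blk y) (hx : (blk x + σ) % 2 = 1)
    (h : toLex (a x, w x) < toLex (a y, w y)) : pairKey a b blk w σ x < pairKey a b blk w σ y := by
  have hy : (blk y + σ) % 2 ≠ 0 := by omega
  simp only [pairKey, Prod.Lex.toLex_lt_toLex, if_neg hy, hb, lt_self_iff_false,
    false_or, true_and]
  simpa only [Prod.Lex.toLex_lt_toLex] using h

lemma pairKey_lt_of_blk_eq_add_one {σ : ℤ} {x y : α} (hb : blk y = blk x + 1)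
    (hx : (blk x + σ) % 2 = 0) (h : a y ≤ b x) : pairKey a b blk w σ y < pairKey a b blk w σ x := by
  have hy : (blk y + σ) % 2 ≠ 0 := by omega
  simp only [pairKey, Prod.Lex.toLex_lt_toLex, hx, hy, decide_true, decide_false]
  refine Or.inr ⟨by omega, ?_⟩
  rcases h.lt_or_eq with h | h
  · exact Or.inl h
  · exact Or.inr ⟨h, Or.inl Bool.false_lt_true⟩

theorem dimLE_three_of_blocks [PartialOrder α] (hab : ∀ x y, x < y ↔ b x < a y)
    (hblk : ∀ x y, b x < a y → blk x < blk y) (hfar : ∀ x y, blk x + 2 ≤ blk y → b x < a y) :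
    DimLE α 3 := by
  -- only breaks ties: any injection of `α` into a linear order would do
  set w := embeddingToCardinal (α := α)
  have hmono : StrictMono blk := fun x y h => hblk x y ((hab x y).1 h)
  refine dimLE_three_of_keys (k₀ := blockKey a blk w) (k₁ := pairKey a b blk w 0)
    (k₂ := pairKey a b blk w 1) (blockKey_injective w.injective)
    (pairKey_injective 0 w.injective) (pairKey_injective 1 w.injective)
    (blockKey_strictMono hmono) (pairKey_strictMono 0 (fun x y => (hab x y).1) hmono)
    (pairKey_strictMono 1 (fun x y => (hab x y).1) hmono) fun x y h₀ h₁ h₂ => ?_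
  by_contra hxy
  have hne : x ≠ y := by rintro rfl; exact hxy le_rfl
  by_cases hyx : y < x
  · exact (blockKey_lt_of_blk_lt (hmono hyx)).not_ge h₀
  have hyx_ends : a y ≤ b x := not_lt.1 fun h => hxy ((hab x y).2 h).le
  have hxy_ends : a x ≤ b y := not_lt.1 fun h => hyx ((hab y x).2 h)
  have hclose : blk y ≤ blk x + 1 ∧ blk x ≤ blk y + 1 :=
    ⟨not_lt.1 fun h => hyx_ends.not_gt (hfar x y (by omega)),
      not_lt.1 fun h => hxy_ends.not_gt (hfar y x (by omega))⟩
  obtain hb | hb | hb : blk y < blk x ∨ blk x = blk y ∨ blk y = blk x + 1 := by omega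
  · exact (blockKey_lt_of_blk_lt hb).not_ge h₀
  · have hkey : toLex (a x, w x) ≠ toLex (a y, w y) := fun h =>
      hne (w.injective (congrArg Prod.snd (toLex_inj.1 h)))
    rcases hkey.lt_or_gt with hlt | hlt
    · exact (blockKey_lt_of_blk_eq hb.symm hlt).not_ge h₀
    · rcases Int.emod_two_eq_zero_or_one (blk x) with hx | hx
      · exact (pairKey_lt_of_blk_eq hb.symm (by omega) hlt).not_ge h₂
      · exact (pairKey_lt_of_blk_eq hb.symm (by omega) hlt).not_ge h₁
  · rcases Int.emod_two_eq_zero_or_one (blk x) with hx | hx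
    · exact (pairKey_lt_of_blk_eq_add_one hb (by omega) hyx_ends).not_ge h₁
    · exact (pairKey_lt_of_blk_eq_add_one hb (by omega) hyx_ends).not_ge h₂

end Blocks

section MixedIntervals

lemma Ioo_subset_and_subset_Icc {S : Set ℝ} {p q : ℝ}
    (h : S = Ioo p q ∨ S = Icc p q ∨ S = Ioc p q ∨ S = Ico p q) :
    Ioo p q ⊆ S ∧ S ⊆ Icc p q := by
  rcases h with rfl | rfl | rfl | rfl
  exacts [⟨subset_rfl, Ioo_subset_Icc_self⟩, ⟨Ioo_subset_Icc_self, subset_rfl⟩,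
    ⟨Ioo_subset_Ioc_self, Ioc_subset_Icc_self⟩, ⟨Ioo_subset_Ico_self, Ico_subset_Icc_self⟩]

variable {S T : Set ℝ} {p q r s : ℝ}

lemma forall_mem_lt_iff (hpq : p < q) (hrs : r < s) (hS : Ioo p q ⊆ S) (hS' : S ⊆ Icc p q)
    (hT : Ioo r s ⊆ T) (hT' : T ⊆ Icc r s) :
    (∀ x ∈ S, ∀ y ∈ T, x < y) ↔ q < r ∨ q = r ∧ ¬(q ∈ S ∧ r ∈ T) := by
  constructor
  · intro h
    by_contra hc
    rcases lt_or_ge r q with hrq | hqr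
    · obtain ⟨x, hx, hxq⟩ := exists_between (max_lt hpq hrq)
      obtain ⟨y, hry, hy⟩ := exists_between (lt_min ((le_max_right p r).trans_lt hx) hrs)
      exact (h x (hS ⟨(le_max_left p r).trans_lt hx, hxq⟩) y
        (hT ⟨hry, hy.trans_le (min_le_right x s)⟩)).not_ge (hy.le.trans (min_le_left x s))
    · push Not at hc
      have hqr' := hqr.antisymm hc.1
      obtain ⟨hq, hr⟩ := hc.2 hqr'
      exact (h q hq r hr).ne hqr'
  · rintro (hqr | ⟨rfl, hq⟩) x hx y hy
    · exact (hS' hx).2.trans_lt (hqr.trans_le (hT' hy).1)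
    · rcases (hS' hx).2.lt_or_eq with hxq | rfl
      · exact hxq.trans_le (hT' hy).1
      · rcases (hT' hy).1.lt_or_eq with hxy | rfl
        · exact hxy
        · exact absurd ⟨hx, hy⟩ hq

/-- An endpoint `(r, n)` stands for `r + nε` with `ε` infinitesimal: an open endpoint is moved
into the interval by `ε`. -/
noncomputable def lowerEnd (S : Set ℝ) (p : ℝ) : ℝ ×ₗ ℤ :=
  toLex (p, open Classical in if p ∈ S then 0 else 1)

noncomputable def upperEnd (S : Set ℝ) (q : ℝ) : ℝ ×ₗ ℤ :=
  toLex (q, open Classical in if q ∈ S then 0 else -1)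

lemma forall_mem_lt_iff_upperEnd_lt_lowerEnd (hpq : p < q) (hrs : r < s) (hS : Ioo p q ⊆ S)
    (hS' : S ⊆ Icc p q) (hT : Ioo r s ⊆ T) (hT' : T ⊆ Icc r s) :
    (∀ x ∈ S, ∀ y ∈ T, x < y) ↔ upperEnd S q < lowerEnd T r := by
  rw [forall_mem_lt_iff hpq hrs hS hS' hT hT', upperEnd, lowerEnd, Prod.Lex.toLex_lt_toLex]
  by_cases hq : q ∈ S <;> by_cases hr : r ∈ T <;> simp [hq, hr]

lemma le_of_upperEnd_lt_lowerEnd (h : upperEnd S q < lowerEnd T r) : q ≤ r := by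
  rcases Prod.Lex.toLex_lt_toLex.1 h with h | ⟨h, -⟩
  exacts [h.le, h.le]

lemma upperEnd_lt_lowerEnd_of_lt (h : q < r) : upperEnd S q < lowerEnd T r :=
  Prod.Lex.toLex_lt_toLex.2 (Or.inl h)

end MixedIntervals

theorem stmt_13_general {α : Type*} [PartialOrder α]
    (h : ∃ (l : α → ℝ) (I : α → Set ℝ),
      (∀ x, I x = Set.Ioo (l x) (l x + 1) ∨ I x = Set.Icc (l x) (l x + 1) ∨
        I x = Set.Ioc (l x) (l x + 1) ∨ I x = Set.Ico (l x) (l x + 1)) ∧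
      ∀ x y : α, x ≠ y → (x < y ↔ ∀ s ∈ I x, ∀ t ∈ I y, s < t)) :
    DimLE α 3 := by
  obtain ⟨l, I, hI, hlt⟩ := h
  have hsub z := Ioo_subset_and_subset_Icc (hI z)
  refine dimLE_three_of_blocks (a := fun z => lowerEnd (I z) (l z))
    (b := fun z => upperEnd (I z) (l z + 1)) (blk := fun z => ⌊l z⌋)
    (fun x y => ?_) (fun x y h => ?_) (fun x y h => ?_)
  · rcases eq_or_ne x y with rfl | hxy
    · simpa only [lt_self_iff_false, false_iff] using
        fun h => (lt_add_one (l x)).not_ge (le_of_upperEnd_lt_lowerEnd h)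
    · rw [hlt x y hxy]
      exact forall_mem_lt_iff_upperEnd_lt_lowerEnd (lt_add_one _) (lt_add_one _)
        (hsub x).1 (hsub x).2 (hsub y).1 (hsub y).2
  · have := Int.floor_le_floor (le_of_upperEnd_lt_lowerEnd h)
    rw [Int.floor_add_one] at this
    omega
  · apply upperEnd_lt_lowerEnd_of_lt
    have : (⌊l x⌋ : ℝ) + 2 ≤ ⌊l y⌋ := by exact_mod_cast h
    linarith [Int.lt_floor_add_one (l x), Int.floor_le (l y)]

/-- Every finite unit mixed interval order — each element assigned a unit interval
that may be open, closed, or half-open, with `x < y` for distinct `x, y` iff every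
point of the interval of `x` is less than every point of the interval of `y` —
has dimension at most 3. -/
theorem stmt_13 {α : Type*} [Fintype α] [PartialOrder α]
    (h : ∃ (l : α → ℝ) (I : α → Set ℝ),
      (∀ x, I x = Set.Ioo (l x) (l x + 1) ∨ I x = Set.Icc (l x) (l x + 1) ∨
        I x = Set.Ioc (l x) (l x + 1) ∨ I x = Set.Ico (l x) (l x + 1)) ∧
      ∀ x y : α, x ≠ y → (x < y ↔ ∀ s ∈ I x, ∀ t ∈ I y, s < t)) :
    DimLE α 3 :=
  stmt_13_general h
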